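/- arXiv:2303.05494 — 6 statements merged into one kernel-verified Lean document; each statement's English description precedes it below -/
import Mathlib

section
/- For every ℏ > 0 and all Schwartz functions f, g, h : ℝ² → ℂ, the Moyal product is associative: (f ⋆_ℏ g) ⋆_ℏ h = f ⋆_ℏ (g ⋆_ℏ h) (in particular all the integrals involved converge absolutely). -/
open MeasureTheory Complex Filter

/-- The Moyal kernel at base point `m`, evaluated on `x = (p'',q'')`, `y = (p',q')`:
`exp((i/(2ℏ))·[(p''−p)(q−q') − (q''−q)(p−p')])`. -/
noncomputable def moyalKernel (ℏ : ℝ) (m x y : ℝ × ℝ) : ℂ :=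
  Complex.exp (Complex.I / (2 * ℏ) *
    (((x.1 - m.1) * (m.2 - y.2) - (x.2 - m.2) * (m.1 - y.1) : ℝ) : ℂ))

/-- The Moyal product `(f ⋆_ℏ g)(p,q) = (4πℏ)⁻² ∫_{ℝ⁴} f(p'',q'') g(p',q') ·
exp((i/(2ℏ))·[(p''−p)(q−q') − (q''−q)(p−p')]) dp'' dq'' dp' dq'`. -/
noncomputable def moyal (ℏ : ℝ) (f g : ℝ × ℝ → ℂ) : ℝ × ℝ → ℂ :=
  fun m => ((4 * Real.pi * ℏ) ^ 2 : ℝ)⁻¹ •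
    ∫ xy : (ℝ × ℝ) × (ℝ × ℝ), f xy.1 * g xy.2 * moyalKernel ℏ m xy.1 xy.2


/-!
Integrating out one variable of the Moyal integral leaves a Fourier integral. With the symplectic
form `ω` and `𝓕ψ(ξ) = ∫ e^{i ω(y, ξ)} ψ(y) dy`,

  `(φ ⋆_ℏ ψ)(m) = (2π)⁻² ∫ φ(m + 2ℏξ) 𝓕ψ(ξ) e^{i ω(ξ, m)} dξ`
            `= (2π)⁻² ∫ 𝓕φ(η) ψ(m - 2ℏη) e^{i ω(η, m)} dη`,

the second form being the first one for `ψ ⋆_{-ℏ} φ = φ ⋆_ℏ ψ`. Expanding `(f ⋆ g) ⋆ h` with the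
first form outside and the second inside, and `f ⋆ (g ⋆ h)` the other way round, turns both into
`(2π)⁻⁴` times the two iterated integrals of one function of `(ξ, η)`. That function is absolutely
integrable since `g` is bounded and `𝓕f`, `𝓕h` are Schwartz functions (Mathlib's Fourier transform
on `ℂ ≃ ℝ²`, up to a linear change of variables), so Fubini gives associativity; the second form
also shows that `f ⋆ g` is integrable.
-/

open SchwartzMap
open scoped FourierTransform RealInnerProductSpace

noncomputable section

namespace Moyal

def symplecticForm (x y : ℝ × ℝ) : ℝ := x.1 * y.2 - x.2 * y.1

local notation "ω" => symplecticForm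

def symplecticFourier (ψ : ℝ × ℝ → ℂ) (ξ : ℝ × ℝ) : ℂ :=
  ∫ y, cexp (ω y ξ * I) • ψ y

lemma moyalKernel_eq_cexp_symplecticForm (ℏ : ℝ) (m x y : ℝ × ℝ) :
    moyalKernel ℏ m x y = cexp (↑(ω (x - m) (m - y) / (2 * ℏ)) * I) := by
  rw [moyalKernel, symplecticForm, Prod.fst_sub, Prod.snd_sub, Prod.fst_sub, Prod.snd_sub]
  congr 1
  push_cast
  ring

lemma norm_moyalKernel (ℏ : ℝ) (m x y : ℝ × ℝ) : ‖moyalKernel ℏ m x y‖ = 1 := by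
  rw [moyalKernel_eq_cexp_symplecticForm, norm_exp_ofReal_mul_I]

lemma moyalKernel_neg_swap (ℏ : ℝ) (m x y : ℝ × ℝ) :
    moyalKernel (-ℏ) m y x = moyalKernel ℏ m x y := by
  simp only [moyalKernel_eq_cexp_symplecticForm, symplecticForm, Prod.fst_sub, Prod.snd_sub]
  congr 2
  push_cast
  ring

lemma moyal_neg_swap (ℏ : ℝ) (φ ψ : ℝ × ℝ → ℂ) : moyal (-ℏ) ψ φ = moyal ℏ φ ψ := by
  funext m
  rw [moyal, moyal, Measure.volume_eq_prod, ← integral_prod_swap]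
  simp only [Prod.fst_swap, Prod.snd_swap, moyalKernel_neg_swap, mul_comm (ψ _)]
  congr 2
  ring

lemma continuous_moyalKernel (ℏ : ℝ) (m : ℝ × ℝ) :
    Continuous fun xy : (ℝ × ℝ) × (ℝ × ℝ) => moyalKernel ℏ m xy.1 xy.2 := by
  unfold moyalKernel
  fun_prop

lemma integrable_moyal_integrand (ℏ : ℝ) {φ ψ : ℝ × ℝ → ℂ} (hφ : Integrable φ)
    (hψ : Integrable ψ) (m : ℝ × ℝ) :
    Integrable fun xy : (ℝ × ℝ) × (ℝ × ℝ) => φ xy.1 * ψ xy.2 * moyalKernel ℏ m xy.1 xy.2 := by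
  refine (hφ.mul_prod hψ).mul_bdd (c := 1) (continuous_moyalKernel ℏ m).aestronglyMeasurable ?_
  exact .of_forall fun xy => (norm_moyalKernel ℏ m _ _).le

lemma integral_moyal_integrand_snd (ℏ : ℝ) (φ ψ : ℝ × ℝ → ℂ) (m x : ℝ × ℝ) :
    ∫ y, φ x * ψ y * moyalKernel ℏ m x y =
      φ x * symplecticFourier ψ ((2 * ℏ)⁻¹ • (x - m)) *
        cexp (ω ((2 * ℏ)⁻¹ • (x - m)) m * I) := by
  have phase : ∀ y, moyalKernel ℏ m x y =
      cexp (ω y ((2 * ℏ)⁻¹ • (x - m)) * I) * cexp (ω ((2 * ℏ)⁻¹ • (x - m)) m * I) := by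
    intro y
    rw [moyalKernel_eq_cexp_symplecticForm, ← Complex.exp_add]
    congr 1
    simp only [symplecticForm, Prod.fst_sub, Prod.snd_sub, Prod.smul_fst, Prod.smul_snd,
      smul_eq_mul]
    push_cast
    ring
  rw [symplecticFourier, ← integral_const_mul, ← integral_mul_const]
  congr 1 with y
  rw [phase, smul_eq_mul]
  ring

theorem moyal_eq_integral_symplecticFourier_right {ℏ : ℝ} (hℏ : ℏ ≠ 0) {φ ψ : ℝ × ℝ → ℂ}
    (hφ : Integrable φ) (hψ : Integrable ψ) (m : ℝ × ℝ) :
    moyal ℏ φ ψ m = ((2 * Real.pi) ^ 2 : ℝ)⁻¹ •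
      ∫ ξ, φ (m + (2 * ℏ) • ξ) * symplecticFourier ψ ξ * cexp (ω ξ m * I) := by
  set G : ℝ × ℝ → ℂ := fun ξ => φ (m + (2 * ℏ) • ξ) * symplecticFourier ψ ξ * cexp (ω ξ m * I)
  have inner : ∀ x, ∫ y, φ x * ψ y * moyalKernel ℏ m x y = G ((2 * ℏ)⁻¹ • (x - m)) := by
    intro x
    rw [integral_moyal_integrand_snd]
    simp only [G, smul_smul, mul_inv_cancel₀ (mul_ne_zero two_ne_zero hℏ), one_smul,
      add_sub_cancel]
  calc moyal ℏ φ ψ m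
      = ((4 * Real.pi * ℏ) ^ 2 : ℝ)⁻¹ • ∫ x, ∫ y, φ x * ψ y * moyalKernel ℏ m x y := by
        rw [moyal, Measure.volume_eq_prod, integral_prod _ (integrable_moyal_integrand ℏ hφ hψ m)]
    _ = ((4 * Real.pi * ℏ) ^ 2 : ℝ)⁻¹ • ∫ x, G ((2 * ℏ)⁻¹ • (x - m)) := by simp_rw [inner]
    _ = ((4 * Real.pi * ℏ) ^ 2 : ℝ)⁻¹ • |(2 * ℏ) ^ 2| • ∫ ξ, G ξ := by
        rw [integral_sub_right_eq_self (fun x => G ((2 * ℏ)⁻¹ • x)),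
          Measure.integral_comp_inv_smul, Module.finrank_prod, Module.finrank_self]
    _ = _ := by
        rw [smul_smul, abs_of_pos (by positivity)]
        congr 1
        field_simp
        ring

theorem moyal_eq_integral_symplecticFourier_left {ℏ : ℝ} (hℏ : ℏ ≠ 0) {φ ψ : ℝ × ℝ → ℂ}
    (hφ : Integrable φ) (hψ : Integrable ψ) (m : ℝ × ℝ) :
    moyal ℏ φ ψ m = ((2 * Real.pi) ^ 2 : ℝ)⁻¹ •
      ∫ η, symplecticFourier φ η * ψ (m - (2 * ℏ) • η) * cexp (ω η m * I) := by
  rw [← moyal_neg_swap, moyal_eq_integral_symplecticFourier_right (neg_ne_zero.2 hℏ) hψ hφ]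
  congr 2 with η
  rw [mul_neg, neg_smul, ← sub_eq_add_neg]
  ring

def symplecticDual : (ℝ × ℝ) ≃L[ℝ] ℂ :=
  equivRealProdCLM.symm.trans
    (ContinuousLinearEquiv.smulLeft (Units.mk0 ((2 * Real.pi)⁻¹ * I) (by simp [Real.pi_ne_zero])))

lemma symplecticDual_apply (ξ : ℝ × ℝ) :
    symplecticDual ξ = (2 * Real.pi)⁻¹ * I * ⟨ξ.1, ξ.2⟩ :=
  rfl

lemma symplecticForm_eq_inner (z : ℂ) (ξ : ℝ × ℝ) :
    ω (equivRealProdCLM z) ξ = -2 * Real.pi * ⟪z, symplecticDual ξ⟫ := by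
  simp [symplecticDual_apply, symplecticForm, Complex.inner]
  field_simp
  ring

theorem exists_schwartzMap_eq_symplecticFourier (f : 𝓢(ℝ × ℝ, ℂ)) :
    ∃ F : 𝓢(ℝ × ℝ, ℂ), ⇑F = symplecticFourier f := by
  refine ⟨compCLMOfContinuousLinearEquiv ℝ symplecticDual
    (𝓕 (compCLMOfContinuousLinearEquiv ℝ equivRealProdCLM f)), ?_⟩
  funext ξ
  simp only [compCLMOfContinuousLinearEquiv_apply, Function.comp_apply, fourier_coe,
    Real.fourier_eq', symplecticFourier]
  rw [← volume_preserving_equiv_real_prod.integral_comp measurableEquivRealProd.measurableEmbedding]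
  congr 1 with z
  rw [← symplecticForm_eq_inner]
  rfl

lemma integrable_symplecticFourier (f : 𝓢(ℝ × ℝ, ℂ)) : Integrable (symplecticFourier f) := by
  obtain ⟨F, hF⟩ := exists_schwartzMap_eq_symplecticFourier f
  exact hF ▸ F.integrable

lemma continuous_symplecticFourier (f : 𝓢(ℝ × ℝ, ℂ)) : Continuous (symplecticFourier f) := by
  obtain ⟨F, hF⟩ := exists_schwartzMap_eq_symplecticFourier f
  exact hF ▸ F.continuous

lemma integrable_mul_comp_sub_smul {u v : ℝ × ℝ → ℂ} (hu : Integrable u) (hv : Integrable v)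
    (hu' : Continuous u) (hv' : Continuous v) (a : ℝ) :
    Integrable (fun p : (ℝ × ℝ) × (ℝ × ℝ) => u p.2 * v (p.1 - a • p.2)) (volume.prod volume) := by
  refine (integrable_prod_iff' (by fun_prop : Continuous _).aestronglyMeasurable).2
    ⟨.of_forall fun η => (hv.comp_sub_right (a • η)).const_mul (u η), ?_⟩
  simp_rw [norm_mul, integral_const_mul, integral_sub_right_eq_self (fun x => ‖v x‖)]
  exact hu.norm.mul_const _

theorem integrable_moyal {ℏ : ℝ} (hℏ : ℏ ≠ 0) (f g : 𝓢(ℝ × ℝ, ℂ)) :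
    Integrable (moyal ℏ f g) := by
  have hΨ : Integrable (fun p : (ℝ × ℝ) × (ℝ × ℝ) =>
      symplecticFourier f p.2 * g (p.1 - (2 * ℏ) • p.2) * cexp (ω p.2 p.1 * I))
      (volume.prod volume) := by
    refine (integrable_mul_comp_sub_smul (integrable_symplecticFourier f) g.integrable
      (continuous_symplecticFourier f) g.continuous (2 * ℏ)).mul_bdd (c := 1) ?_
      (.of_forall fun p => (norm_exp_ofReal_mul_I _).le)
    exact (by unfold symplecticForm; fun_prop : Continuous _).aestronglyMeasurable
  refine (hΨ.integral_prod_left.smul ((2 * Real.pi) ^ 2 : ℝ)⁻¹).congr (.of_forall fun m => ?_)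
  rw [moyal_eq_integral_symplecticFourier_left hℏ f.integrable g.integrable]
  rfl

def moyalTripleIntegrand (ℏ : ℝ) (φ ψ χ : ℝ × ℝ → ℂ) (m ξ η : ℝ × ℝ) : ℂ :=
  symplecticFourier φ η * ψ (m + (2 * ℏ) • ξ - (2 * ℏ) • η) * symplecticFourier χ ξ *
    cexp (↑(ω ξ m + ω η m + 2 * ℏ * ω η ξ) * I)

lemma integrable_moyalTripleIntegrand (ℏ : ℝ) (f g h : 𝓢(ℝ × ℝ, ℂ)) (m : ℝ × ℝ) :
    Integrable (Function.uncurry (moyalTripleIntegrand ℏ f g h m)) (volume.prod volume) := by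
  have hcont : Continuous (Function.uncurry (moyalTripleIntegrand ℏ f g h m)) := by
    have hf := continuous_symplecticFourier f
    have hh := continuous_symplecticFourier h
    have hg := g.continuous
    unfold Function.uncurry moyalTripleIntegrand symplecticForm
    fun_prop
  have hbound := ((integrable_symplecticFourier h).mul_prod
    (integrable_symplecticFourier f)).norm.const_mul (SchwartzMap.seminorm ℝ 0 0 g)
  refine hbound.mono' hcont.aestronglyMeasurable (.of_forall fun p => ?_)
  simp only [Function.uncurry, moyalTripleIntegrand, norm_mul, norm_exp_ofReal_mul_I, mul_one]
  have hg_le := g.norm_le_seminorm ℝ (m + (2 * ℏ) • p.1 - (2 * ℏ) • p.2)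
  calc _ = ‖g (m + (2 * ℏ) • p.1 - (2 * ℏ) • p.2)‖ *
        (‖symplecticFourier h p.1‖ * ‖symplecticFourier f p.2‖) := by ring
    _ ≤ _ := by gcongr

theorem moyal_moyal_left {ℏ : ℝ} (hℏ : ℏ ≠ 0) {φ ψ χ : ℝ × ℝ → ℂ} (hφ : Integrable φ)
    (hψ : Integrable ψ) (hχ : Integrable χ) (hφψ : Integrable (moyal ℏ φ ψ)) (m : ℝ × ℝ) :
    moyal ℏ (moyal ℏ φ ψ) χ m = ((2 * Real.pi) ^ 2 : ℝ)⁻¹ • ((2 * Real.pi) ^ 2 : ℝ)⁻¹ •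
      ∫ ξ, ∫ η, moyalTripleIntegrand ℏ φ ψ χ m ξ η := by
  rw [moyal_eq_integral_symplecticFourier_right hℏ hφψ hχ]
  congr 1
  rw [← integral_smul]
  congr 1 with ξ
  rw [moyal_eq_integral_symplecticFourier_left hℏ hφ hψ, smul_mul_assoc, smul_mul_assoc,
    ← integral_mul_const, ← integral_mul_const]
  congr 2 with η
  have phase : ω η (m + (2 * ℏ) • ξ) + ω ξ m = ω ξ m + ω η m + 2 * ℏ * ω η ξ := by
    simp only [symplecticForm, Prod.fst_add, Prod.snd_add, Prod.smul_fst, Prod.smul_snd,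
      smul_eq_mul]
    ring
  rw [moyalTripleIntegrand, ← phase, ofReal_add, add_mul, Complex.exp_add]
  ring

theorem moyal_moyal_right {ℏ : ℝ} (hℏ : ℏ ≠ 0) {φ ψ χ : ℝ × ℝ → ℂ} (hφ : Integrable φ)
    (hψ : Integrable ψ) (hχ : Integrable χ) (hψχ : Integrable (moyal ℏ ψ χ)) (m : ℝ × ℝ) :
    moyal ℏ φ (moyal ℏ ψ χ) m = ((2 * Real.pi) ^ 2 : ℝ)⁻¹ • ((2 * Real.pi) ^ 2 : ℝ)⁻¹ •
      ∫ η, ∫ ξ, moyalTripleIntegrand ℏ φ ψ χ m ξ η := by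
  rw [moyal_eq_integral_symplecticFourier_left hℏ hφ hψχ]
  congr 1
  rw [← integral_smul]
  congr 1 with η
  rw [moyal_eq_integral_symplecticFourier_right hℏ hψ hχ, mul_smul_comm, smul_mul_assoc,
    ← integral_const_mul, ← integral_mul_const]
  congr 2 with ξ
  have phase : ω ξ (m - (2 * ℏ) • η) + ω η m = ω ξ m + ω η m + 2 * ℏ * ω η ξ := by
    simp only [symplecticForm, Prod.fst_sub, Prod.snd_sub, Prod.smul_fst, Prod.smul_snd,
      smul_eq_mul]
    ring
  rw [moyalTripleIntegrand, ← phase, ofReal_add, add_mul, Complex.exp_add, sub_add_eq_add_sub]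
  ring

end Moyal

end

open Moyal in
/-- For every `ℏ > 0` and all Schwartz functions `f, g, h : ℝ² → ℂ`, the Moyal product is
associative (and all integrals involved converge absolutely). -/
theorem moyal_assoc (ℏ : ℝ) (hℏ : 0 < ℏ) (f g h : SchwartzMap (ℝ × ℝ) ℂ) :
    (∀ m : ℝ × ℝ, Integrable (fun xy : (ℝ × ℝ) × (ℝ × ℝ) =>
      f xy.1 * g xy.2 * moyalKernel ℏ m xy.1 xy.2)) ∧
    (∀ m : ℝ × ℝ, Integrable (fun xy : (ℝ × ℝ) × (ℝ × ℝ) =>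
      g xy.1 * h xy.2 * moyalKernel ℏ m xy.1 xy.2)) ∧
    (∀ m : ℝ × ℝ, Integrable (fun xy : (ℝ × ℝ) × (ℝ × ℝ) =>
      moyal ℏ (⇑f) (⇑g) xy.1 * h xy.2 * moyalKernel ℏ m xy.1 xy.2)) ∧
    (∀ m : ℝ × ℝ, Integrable (fun xy : (ℝ × ℝ) × (ℝ × ℝ) =>
      f xy.1 * moyal ℏ (⇑g) (⇑h) xy.2 * moyalKernel ℏ m xy.1 xy.2)) ∧
    moyal ℏ (moyal ℏ (⇑f) (⇑g)) (⇑h) = moyal ℏ (⇑f) (moyal ℏ (⇑g) (⇑h)) := by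
  have hfg := integrable_moyal hℏ.ne' f g
  have hgh := integrable_moyal hℏ.ne' g h
  refine ⟨integrable_moyal_integrand ℏ f.integrable g.integrable,
    integrable_moyal_integrand ℏ g.integrable h.integrable,
    integrable_moyal_integrand ℏ hfg h.integrable,
    integrable_moyal_integrand ℏ f.integrable hgh, funext fun m => ?_⟩
  rw [moyal_moyal_left hℏ.ne' f.integrable g.integrable h.integrable hfg,
    moyal_moyal_right hℏ.ne' f.integrable g.integrable h.integrable hgh,
    integral_integral_swap (integrable_moyalTripleIntegrand ℏ f g h m)]
end

section
/- For every ℏ > 0 and all Schwartz functions f, g : ℝ² → ℂ, complex conjugation is an involution for the Moyal product: the complex conjugate of f ⋆_ℏ g equals (conj g) ⋆_ℏ (conj f), where conj denotes pointwise complex conjugation. -/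
/-! The phase of the Moyal kernel is antisymmetric in its two integration variables, so
conjugating the kernel exchanges them; conjugating the whole integrand and relabelling
`(x, y) ↦ (y, x)` turns the integrand of `f ⋆ g` into that of `conj g ⋆ conj f`. -/

open MeasureTheory Complex Filter

theorem conj_moyalKernel (ℏ : ℝ) (m x y : ℝ × ℝ) :
    starRingEnd ℂ (moyalKernel ℏ m x y) = moyalKernel ℏ m y x := by
  rw [moyalKernel, moyalKernel, ← Complex.exp_conj]
  congr 1
  simp only [map_mul, map_div₀, Complex.conj_I, Complex.conj_ofReal, map_ofNat]
  push_cast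
  ring

/-- No integrability is needed: conjugation and the swap commute with the Bochner integral
also where it takes its junk value `0`. -/
theorem conj_moyal (ℏ : ℝ) (f g : ℝ × ℝ → ℂ) :
    (fun m => starRingEnd ℂ (moyal ℏ f g m))
      = moyal ℏ (fun m => starRingEnd ℂ (g m)) (fun m => starRingEnd ℂ (f m)) := by
  funext m
  rw [moyal, moyal, Complex.real_smul, Complex.real_smul, map_mul, Complex.conj_ofReal,
    ← integral_conj, Measure.volume_eq_prod, ← integral_prod_swap]
  congr 2 with xy
  rw [map_mul, map_mul, conj_moyalKernel, Prod.fst_swap, Prod.snd_swap]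
  ring

theorem moyal_star_involution_general (ℏ : ℝ) (f g : SchwartzMap (ℝ × ℝ) ℂ) :
    (fun m => starRingEnd ℂ (moyal ℏ (⇑f) (⇑g) m))
      = moyal ℏ (fun m => starRingEnd ℂ (g m)) (fun m => starRingEnd ℂ (f m)) :=
  conj_moyal ℏ f g

/-- Complex conjugation is an involution for the Moyal product:
the conjugate of `f ⋆_ℏ g` equals `(conj g) ⋆_ℏ (conj f)`. -/
theorem moyal_star_involution (ℏ : ℝ) (hℏ : 0 < ℏ) (f g : SchwartzMap (ℝ × ℝ) ℂ) :
    (fun m => starRingEnd ℂ (moyal ℏ (⇑f) (⇑g) m))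
      = moyal ℏ (fun m => starRingEnd ℂ (g m)) (fun m => starRingEnd ℂ (f m)) :=
  moyal_star_involution_general ℏ f g
end

section
/- For every ℏ > 0 and all Schwartz functions f, g : ℝ² → ℂ, the trace property holds: ∫_{ℝ²} (f ⋆_ℏ g)(p,q) dp dq = ∫_{ℝ²} f(p,q) g(p,q) dp dq, both integrals being absolutely convergent. -/
open MeasureTheory Complex Filter

/-!
Put `x = m + u`, `y = m + v` and `W u = (4πℏ)⁻¹ • J u` with `J` the quarter turn. The Moyal kernel
becomes the character `𝐞 (-⟪v, W u⟫)`, so the `v`-integral is a Fourier transform of `g`: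
`(f ⋆ g)(m) = (4πℏ)⁻² ∫ f (m + u) ĝ (W u) 𝐞 ⟪m, W u⟫ du`. This integrand is integrable in `(m, u)`
(a shear turns its modulus into `|f| ⊗ |ĝ ∘ W|`), and as `⟪u, W u⟫ = 0` its `m`-integral is
`f̂ (-W u) ĝ (W u)`. Substituting `w = W u` (Jacobian `(4πℏ)⁻²`) leaves `∫ f̂ (-w) ĝ (w) dw`,
which is `∫ f g` by Fourier inversion.

Mathlib's Schwartz-space Fourier theory needs an inner product space, and `ℝ × ℝ` carries the sup
norm, so the Fourier transform on `ℝ × ℝ` is taken for the dot product and compared with the one on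
`EuclideanSpace ℝ (Fin 2)`.
-/

open scoped FourierTransform RealInnerProductSpace Real

section InnerProductSpace

variable {V : Type*} [NormedAddCommGroup V] [InnerProductSpace ℝ V] [FiniteDimensional ℝ V]
  [MeasurableSpace V] [BorelSpace V]

theorem SchwartzMap.integral_fourier_neg_mul_fourier (f g : SchwartzMap V ℂ) :
    ∫ ξ, 𝓕 (⇑f) (-ξ) * 𝓕 (⇑g) ξ = ∫ x, f x * g x := by
  simpa [fourierInv_coe, fourier_coe, Real.fourierInv_eq_fourier_neg] using
    SchwartzMap.integral_fourierInv_mul_eq f (𝓕 g)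

end InnerProductSpace

section Transport

variable {V W : Type*} [NormedAddCommGroup V] [InnerProductSpace ℝ V] [FiniteDimensional ℝ V]
  [MeasurableSpace V] [BorelSpace V] [NormedAddCommGroup W] [NormedSpace ℝ W]
  [MeasurableSpace W] [BorelSpace W] {μ : Measure W} {ρ : V ≃L[ℝ] W}
  {L : W →ₗ[ℝ] W →ₗ[ℝ] ℝ}

theorem VectorFourier.fourierIntegral_apply_eq_fourier_comp (hρ : MeasurePreserving ρ volume μ)
    (hL : ∀ x y, L (ρ x) (ρ y) = ⟪x, y⟫) (f : W → ℂ) (ξ : V) :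
    fourierIntegral 𝐞 μ L f (ρ ξ) = 𝓕 (f ∘ ρ) ξ := by
  rw [fourierIntegral, Real.fourier_eq, ← hρ.integral_comp ρ.toHomeomorph.measurableEmbedding]
  simp [hL]

theorem SchwartzMap.integrable_fourierIntegral (hρ : MeasurePreserving ρ volume μ)
    (hL : ∀ x y, L (ρ x) (ρ y) = ⟪x, y⟫) (f : SchwartzMap W ℂ) :
    Integrable (VectorFourier.fourierIntegral 𝐞 μ L f) μ := by
  rw [← hρ.integrable_comp_emb ρ.toHomeomorph.measurableEmbedding]
  have hcomp : VectorFourier.fourierIntegral 𝐞 μ L f ∘ ρ =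
      𝓕 ⇑(SchwartzMap.compCLMOfContinuousLinearEquiv ℝ ρ f) :=
    funext (VectorFourier.fourierIntegral_apply_eq_fourier_comp hρ hL f)
  rw [hcomp, ← SchwartzMap.fourier_coe]
  exact SchwartzMap.integrable _

theorem SchwartzMap.integral_fourierIntegral_neg_mul (hρ : MeasurePreserving ρ volume μ)
    (hL : ∀ x y, L (ρ x) (ρ y) = ⟪x, y⟫) (f g : SchwartzMap W ℂ) :
    ∫ w, VectorFourier.fourierIntegral 𝐞 μ L f (-w) * VectorFourier.fourierIntegral 𝐞 μ L g w ∂μ =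
      ∫ w, f w * g w ∂μ := by
  have hemb := ρ.toHomeomorph.measurableEmbedding
  rw [← hρ.integral_comp hemb, ← hρ.integral_comp hemb (fun w => f w * g w)]
  simp only [← map_neg ρ, VectorFourier.fourierIntegral_apply_eq_fourier_comp hρ hL]
  exact SchwartzMap.integral_fourier_neg_mul_fourier
    (SchwartzMap.compCLMOfContinuousLinearEquiv ℝ ρ f)
    (SchwartzMap.compCLMOfContinuousLinearEquiv ℝ ρ g)

end Transport

theorem VectorFourier.integral_mul_fourierChar_comp_add {V W : Type*} [AddCommGroup V]
    [Module ℝ V] [MeasurableSpace V] [MeasurableAdd V] [AddCommGroup W] [Module ℝ W]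
    (μ : Measure V) [μ.IsAddRightInvariant] (L : V →ₗ[ℝ] W →ₗ[ℝ] ℝ) (f : V → ℂ) (v₀ : V)
    (w : W) :
    ∫ v, f (v₀ + v) * 𝐞 (-L v w) ∂μ = fourierIntegral 𝐞 μ L f w * 𝐞 (L v₀ w) := by
  have h := congrFun (fourierIntegral_comp_add_right 𝐞 μ L f v₀) w
  simp only [fourierIntegral, Function.comp_apply, Circle.smul_def, smul_eq_mul] at h ⊢
  simpa only [add_comm v₀, mul_comm] using h

theorem MeasureTheory.Integrable.mul_fourierChar {α : Type*} [MeasurableSpace α] {μ : Measure α}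
    {F : α → ℂ} (hF : Integrable F μ) {φ : α → ℝ} (hφ : Measurable φ) :
    Integrable (fun a => F a * 𝐞 (φ a)) μ :=
  hF.mul_bdd ((continuous_subtype_val.comp Real.continuous_fourierChar).measurable.comp hφ
    |>.aestronglyMeasurable) (ae_of_all _ fun _ => (Circle.norm_coe _).le)

def dotₗ : (ℝ × ℝ) →ₗ[ℝ] (ℝ × ℝ) →ₗ[ℝ] ℝ :=
  LinearMap.mk₂ ℝ (fun v w => v.1 * w.1 + v.2 * w.2)
    (fun _ _ _ => by simp only [Prod.fst_add, Prod.snd_add]; ring)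
    (fun _ _ _ => by simp only [Prod.smul_fst, Prod.smul_snd, smul_eq_mul]; ring)
    (fun _ _ _ => by simp only [Prod.fst_add, Prod.snd_add]; ring)
    (fun _ _ _ => by simp only [Prod.smul_fst, Prod.smul_snd, smul_eq_mul]; ring)

@[simp] lemma dotₗ_apply (v w : ℝ × ℝ) : dotₗ v w = v.1 * w.1 + v.2 * w.2 := rfl

noncomputable def euclideanEquivProd : EuclideanSpace ℝ (Fin 2) ≃L[ℝ] ℝ × ℝ :=
  (EuclideanSpace.equiv (Fin 2) ℝ).trans (ContinuousLinearEquiv.finTwoArrow ℝ ℝ)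

lemma measurePreserving_euclideanEquivProd :
    MeasurePreserving euclideanEquivProd volume volume :=
  (volume_preserving_finTwoArrow ℝ).comp
    (EuclideanSpace.volume_preserving_symm_measurableEquiv_toLp (Fin 2))

lemma dotₗ_euclideanEquivProd (x y : EuclideanSpace ℝ (Fin 2)) :
    dotₗ (euclideanEquivProd x) (euclideanEquivProd y) = ⟪x, y⟫ := by
  simp [euclideanEquivProd, PiLp.inner_apply, Fin.sum_univ_two, EuclideanSpace.equiv, mul_comm]

noncomputable def rot90 : (ℝ × ℝ) ≃L[ℝ] (ℝ × ℝ) :=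
  (ContinuousLinearEquiv.prodComm ℝ ℝ ℝ).trans
    ((ContinuousLinearEquiv.neg ℝ).prodCongr (ContinuousLinearEquiv.refl ℝ ℝ))

@[simp] lemma rot90_apply (u : ℝ × ℝ) : rot90 u = (-u.2, u.1) := rfl

lemma measurePreserving_rot90 : MeasurePreserving rot90 volume volume :=
  ((Measure.measurePreserving_neg volume).prod (MeasurePreserving.id volume)).comp
    Measure.measurePreserving_swap

lemma dotₗ_rot90_self (u : ℝ × ℝ) : dotₗ u (rot90 u) = 0 := by
  simp only [dotₗ_apply, rot90_apply]
  ring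

lemma integral_comp_smul_rot90 {E : Type*} [NormedAddCommGroup E] [NormedSpace ℝ E]
    (Φ : ℝ × ℝ → E) (c : ℝ) : ∫ u, Φ (c • rot90 u) = (c ^ 2)⁻¹ • ∫ w, Φ w := by
  rw [measurePreserving_rot90.integral_comp rot90.toHomeomorph.measurableEmbedding
    (fun w => Φ (c • w)), Measure.integral_comp_smul]
  simp [Module.finrank_prod]

lemma MeasureTheory.Integrable.comp_smul_rot90 {E : Type*} [NormedAddCommGroup E]
    {Φ : ℝ × ℝ → E} (hΦ : Integrable Φ) {c : ℝ} (hc : c ≠ 0) :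
    Integrable fun u => Φ (c • rot90 u) :=
  (measurePreserving_rot90.integrable_comp_emb rot90.toHomeomorph.measurableEmbedding).2
    (hΦ.comp_smul hc)

local notation "𝓕₂" => VectorFourier.fourierIntegral 𝐞 volume dotₗ

section Moyal

variable {ℏ : ℝ}

lemma moyalKernel_add_add (m u v : ℝ × ℝ) :
    moyalKernel ℏ m (m + u) (m + v) = 𝐞 (-dotₗ v ((4 * π * ℏ)⁻¹ • rot90 u)) := by
  rw [moyalKernel, Real.fourierChar_apply]
  congr 1
  simp only [Prod.fst_add, Prod.snd_add, dotₗ_apply, rot90_apply, Prod.smul_fst, Prod.smul_snd,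
    smul_eq_mul]
  push_cast
  field_simp
  ring

noncomputable def moyalIntegrand (ℏ : ℝ) (f g : ℝ × ℝ → ℂ) (m u : ℝ × ℝ) : ℂ :=
  f (m + u) * 𝓕₂ g ((4 * π * ℏ)⁻¹ • rot90 u) *
    𝐞 (dotₗ m ((4 * π * ℏ)⁻¹ • rot90 u))

lemma moyal_eq_smul_integral_moyalIntegrand {f g : ℝ × ℝ → ℂ} (hf : Integrable f)
    (hg : Integrable g) (m : ℝ × ℝ) :
    moyal ℏ f g m = ((4 * π * ℏ) ^ 2)⁻¹ • ∫ u, moyalIntegrand ℏ f g m u := by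
  have hshift : Integrable fun uv : (ℝ × ℝ) × (ℝ × ℝ) =>
      f (m + uv.1) * g (m + uv.2) * 𝐞 (-dotₗ uv.2 ((4 * π * ℏ)⁻¹ • rot90 uv.1)) :=
    ((hf.comp_add_left m).mul_prod (hg.comp_add_left m)).mul_fourierChar (by fun_prop)
  rw [moyal, Measure.volume_eq_prod, ← integral_add_left_eq_self _ (m, m)]
  simp only [Prod.fst_add, Prod.snd_add, moyalKernel_add_add]
  rw [integral_prod _ hshift]
  congr 1
  refine integral_congr_ae (ae_of_all _ fun u => ?_)
  simp only [mul_assoc, integral_const_mul, VectorFourier.integral_mul_fourierChar_comp_add,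
    moyalIntegrand]

lemma integrable_moyalIntegrand (hℏ : ℏ ≠ 0) {f g : ℝ × ℝ → ℂ} (hf : Integrable f)
    (hĝ : Integrable (𝓕₂ g)) : Integrable (Function.uncurry (moyalIntegrand ℏ f g)) := by
  have hc : (4 * π * ℏ)⁻¹ ≠ 0 := by positivity
  have hshear := (measurePreserving_add_prod volume volume).integrable_comp_of_integrable
    (hf.mul_prod (hĝ.comp_smul_rot90 hc))
  exact hshear.mul_fourierChar (by fun_prop)

lemma integral_moyalIntegrand_left (f g : ℝ × ℝ → ℂ) (u : ℝ × ℝ) :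
    ∫ m, moyalIntegrand ℏ f g m u =
      𝓕₂ f (-((4 * π * ℏ)⁻¹ • rot90 u)) * 𝓕₂ g ((4 * π * ℏ)⁻¹ • rot90 u) := by
  have hw : dotₗ u (-((4 * π * ℏ)⁻¹ • rot90 u)) = 0 := by
    simp only [map_neg, map_smul, dotₗ_rot90_self, smul_zero, neg_zero]
  have hfourier := VectorFourier.integral_mul_fourierChar_comp_add volume dotₗ f u
    (-((4 * π * ℏ)⁻¹ • rot90 u))
  simp only [hw, map_neg, neg_neg, AddChar.map_zero_eq_one, Circle.coe_one, mul_one] at hfourier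
  simp only [moyalIntegrand, mul_right_comm _ (𝓕₂ g _), integral_mul_const, add_comm _ u, hfourier]

end Moyal

/-- The trace property of the Moyal product:
`∫ (f ⋆_ℏ g) = ∫ f·g`, both integrals being absolutely convergent. -/
theorem moyal_trace (ℏ : ℝ) (hℏ : 0 < ℏ) (f g : SchwartzMap (ℝ × ℝ) ℂ) :
    Integrable (moyal ℏ (⇑f) (⇑g)) ∧
    Integrable (fun m : ℝ × ℝ => f m * g m) ∧
    (∫ m : ℝ × ℝ, moyal ℏ (⇑f) (⇑g) m) = ∫ m : ℝ × ℝ, f m * g m := by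
  have hρ := measurePreserving_euclideanEquivProd
  have hF := integrable_moyalIntegrand hℏ.ne' f.integrable
    (SchwartzMap.integrable_fourierIntegral hρ dotₗ_euclideanEquivProd g)
  have hmoyal : moyal ℏ f g = fun m => ((4 * π * ℏ) ^ 2)⁻¹ • ∫ u, moyalIntegrand ℏ f g m u :=
    funext (moyal_eq_smul_integral_moyalIntegrand f.integrable g.integrable)
  refine ⟨?_, g.integrable.mul_of_top_right f.memLp_top, ?_⟩
  · rw [hmoyal]
    exact hF.integral_prod_left.smul ((4 * π * ℏ) ^ 2)⁻¹
  calc ∫ m, moyal ℏ f g m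
      = ((4 * π * ℏ) ^ 2)⁻¹ • ∫ u, ∫ m, moyalIntegrand ℏ f g m u := by
        rw [hmoyal, integral_smul, integral_integral_swap hF]
    _ = ((4 * π * ℏ) ^ 2)⁻¹ • ∫ u, 𝓕₂ f (-((4 * π * ℏ)⁻¹ • rot90 u)) *
          𝓕₂ g ((4 * π * ℏ)⁻¹ • rot90 u) := by
        simp only [integral_moyalIntegrand_left]
    _ = ∫ w, 𝓕₂ f (-w) * 𝓕₂ g w := by
        rw [integral_comp_smul_rot90 (fun w => 𝓕₂ f (-w) * 𝓕₂ g w), smul_smul, inv_pow, inv_inv,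
          inv_mul_cancel₀ (by positivity), one_smul]
    _ = ∫ m, f m * g m :=
        SchwartzMap.integral_fourierIntegral_neg_mul hρ dotₗ_euclideanEquivProd f g
end

section
/- For all Schwartz functions f, g : ℝ² → ℂ and every point (p,q) ∈ ℝ², the Moyal product converges pointwise to the pointwise product in the semiclassical limit: lim_{ℏ → 0⁺} (f ⋆_ℏ g)(p,q) = f(p,q) · g(p,q). -/
/-!
Identify ℝ² with ℂ, so that the phase of the Moyal kernel is `⟪J (x - m), m - y⟫ / (2ℏ)` with
`J` the rotation by a right angle. Integrating out `y` turns `g` into its Fourier transform `ĝ`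
evaluated at `J (x - m) / (4πℏ)`; rescaling `x = m + 4πℏ u` then gives
`(f ⋆_ℏ g)(m) = ∫ f (m + 4πℏ u) 𝐞 ⟪J u, m⟫ ĝ (J u) du`. As `ℏ → 0⁺` this tends, by dominated
convergence, to `f m ∫ 𝐞 ⟪ξ, m⟫ ĝ ξ dξ`, which is `f m * g m` by Fourier inversion.
-/

open MeasureTheory Complex Filter

open Module
open scoped FourierTransform RealInnerProductSpace Topology BoundedContinuousFunction SchwartzMap

theorem tendsto_integral_mul_comp_add_smul {E 𝕜 : Type*} [NormedAddCommGroup E] [NormedSpace ℝ E]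
    [MeasurableSpace E] [OpensMeasurableSpace E] [RCLike 𝕜] {ν : Measure E} (F : E →ᵇ 𝕜)
    {ψ : E → 𝕜} (hψ : Integrable ψ ν) (x : E) :
    Tendsto (fun t : ℝ => ∫ u, F (x + t • u) * ψ u ∂ν) (𝓝 0) (𝓝 (F x * ∫ u, ψ u ∂ν)) := by
  rw [← integral_const_mul]
  refine tendsto_integral_filter_of_dominated_convergence (fun u => ‖F‖ * ‖ψ u‖) ?_ ?_
    (hψ.norm.const_mul _) ?_
  · exact .of_forall fun t =>
      (by fun_prop : Continuous fun u => F (x + t • u)).aestronglyMeasurable.mul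
        hψ.aestronglyMeasurable
  · refine .of_forall fun t => .of_forall fun u => ?_
    rw [norm_mul]
    exact mul_le_mul_of_nonneg_right (F.norm_coe_le_norm _) (norm_nonneg _)
  · refine .of_forall fun u => ?_
    have hpath : Tendsto (fun t : ℝ => x + t • u) (𝓝 0) (𝓝 x) := by
      simpa using (by fun_prop : Continuous fun t : ℝ => x + t • u).tendsto 0
    exact ((F.continuous.tendsto x).comp hpath).mul_const _

section TwistedMoyal

variable {V : Type*} [NormedAddCommGroup V] [InnerProductSpace ℝ V] [FiniteDimensional ℝ V]
  [MeasurableSpace V] [BorelSpace V]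

noncomputable def twistedMoyal (A : V ≃ₗᵢ[ℝ] V) (t : ℝ) (F G : V → ℂ) (x : V) : ℂ :=
  (t ^ finrank ℝ V)⁻¹ • ∫ p : V × V, F p.1 * G p.2 * 𝐞 (⟪A (p.1 - x), x - p.2⟫ / t)

theorem integral_mul_fourierChar_inner (G : V → ℂ) (a x : V) (t : ℝ) :
    ∫ y, G y * 𝐞 (⟪a, x - y⟫ / t) = 𝐞 ⟪t⁻¹ • a, x⟫ * 𝓕 G (t⁻¹ • a) := by
  rw [Real.fourier_eq, ← integral_const_mul]
  congr 1 with y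
  rw [Circle.smul_def, smul_eq_mul, ← mul_assoc, mul_comm (G y), ← Circle.coe_mul,
    ← AddChar.map_add_eq_mul]
  congr 3
  rw [inner_sub_right, real_inner_smul_left, real_inner_smul_right, real_inner_comm a y]
  ring

theorem integrable_twistedMoyal_integrand (A : V ≃ₗᵢ[ℝ] V) (F G : 𝓢(V, ℂ)) (t : ℝ) (x : V) :
    Integrable (fun p : V × V => F p.1 * G p.2 * 𝐞 (⟪A (p.1 - x), x - p.2⟫ / t))
      (volume.prod volume) :=
  (F.integrable.mul_prod G.integrable).mul_bdd (by fun_prop) (c := 1)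
    (.of_forall fun _ => (Circle.norm_coe _).le)

theorem twistedMoyal_eq_integral (A : V ≃ₗᵢ[ℝ] V) (F G : 𝓢(V, ℂ)) {t : ℝ} (ht : 0 < t)
    (x : V) : twistedMoyal A t F G x = ∫ u, F (x + t • u) * (𝐞 ⟪A u, x⟫ * 𝓕 G (A u)) := by
  set Ψ : V → ℂ := fun ξ => 𝐞 ⟪ξ, x⟫ * 𝓕 G ξ
  have hfiber (z : V) :
      ∫ y, F z * G y * 𝐞 (⟪A (z - x), x - y⟫ / t) = F z * Ψ (t⁻¹ • A (z - x)) := by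
    simp_rw [mul_assoc, integral_const_mul, integral_mul_fourierChar_inner,
      ← SchwartzMap.fourier_coe]
    rfl
  rw [twistedMoyal, Measure.volume_eq_prod,
    integral_prod _ (integrable_twistedMoyal_integrand A F G t x)]
  simp_rw [hfiber]
  rw [← integral_add_left_eq_self _ x, inv_smul_eq_iff₀ (pow_pos ht _).ne',
    ← Measure.integral_comp_inv_smul_of_nonneg _ _ ht.le]
  congr 1 with u
  simp [smul_smul, ht.ne', Ψ]

theorem integral_fourierChar_mul_fourier (G : 𝓢(V, ℂ)) (x : V) :
    ∫ ξ, 𝐞 ⟪ξ, x⟫ * 𝓕 G ξ = G x := by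
  conv_rhs => rw [← FourierPair.fourierInv_fourier_eq (F := 𝓢(V, ℂ)) G,
    SchwartzMap.fourierInv_coe, Real.fourierInv_eq]
  simp only [Circle.smul_def, smul_eq_mul]

theorem tendsto_twistedMoyal (A : V ≃ₗᵢ[ℝ] V) (F G : 𝓢(V, ℂ)) (x : V) :
    Tendsto (fun t => twistedMoyal A t F G x) (𝓝[>] 0) (𝓝 (F x * G x)) := by
  set Ψ : V → ℂ := fun ξ => 𝐞 ⟪ξ, x⟫ * 𝓕 G ξ
  have hΨ : Integrable Ψ :=
    (𝓕 G).integrable.bdd_mul (by fun_prop) (c := 1) (.of_forall fun _ => (Circle.norm_coe _).le)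
  have hΨA : ∫ u, Ψ (A u) = G x := by
    rw [A.measurePreserving.integral_comp A.toHomeomorph.measurableEmbedding]
    exact integral_fourierChar_mul_fourier G x
  have hlim := tendsto_integral_mul_comp_add_smul F.toBoundedContinuousFunction
    (A.measurePreserving.integrable_comp_of_integrable hΨ) x
  rw [Function.comp_def, hΨA] at hlim
  refine (hlim.mono_left nhdsWithin_le_nhds).congr' ?_
  filter_upwards [self_mem_nhdsWithin] with t ht
  exact (twistedMoyal_eq_integral A F G ht x).symm

end TwistedMoyal

attribute [local instance] Complex.finrank_real_complex_fact

local notation "J" => Complex.orientation.rightAngleRotation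

theorem moyalKernel_measurableEquivRealProd (ℏ : ℝ) (μ z w : ℂ) :
    moyalKernel ℏ (measurableEquivRealProd μ) (measurableEquivRealProd z)
      (measurableEquivRealProd w) = 𝐞 (⟪J (z - μ), μ - w⟫ / (4 * Real.pi * ℏ)) := by
  rw [moyalKernel, Real.fourierChar_apply, Orientation.inner_rightAngleRotation_left,
    Complex.areaForm]
  congr 1
  simp only [measurableEquivRealProd_apply, mul_im, conj_re, conj_im, sub_re, sub_im]
  have hπ := Real.pi_ne_zero
  push_cast
  field_simp
  ring

theorem moyal_eq_twistedMoyal (ℏ : ℝ) (f g : ℝ × ℝ → ℂ) (m : ℝ × ℝ) :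
    moyal ℏ f g m = twistedMoyal J (4 * Real.pi * ℏ) (f ∘ measurableEquivRealProd)
      (g ∘ measurableEquivRealProd) (measurableEquivRealProd.symm m) := by
  have he := volume_preserving_equiv_real_prod
  have hprod : MeasurePreserving (measurableEquivRealProd.prodCongr measurableEquivRealProd)
      volume volume := he.prod he
  rw [moyal, twistedMoyal, Complex.finrank_real_complex, ← hprod.integral_comp']
  congr 2 with p
  rw [← moyalKernel_measurableEquivRealProd, measurableEquivRealProd.apply_symm_apply]
  rfl

/-- Pointwise semiclassical limit of the Moyal product:
`lim_{ℏ → 0⁺} (f ⋆_ℏ g)(p,q) = f(p,q)·g(p,q)`. -/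
theorem moyal_semiclassical_limit (f g : SchwartzMap (ℝ × ℝ) ℂ) (m : ℝ × ℝ) :
    Tendsto (fun ℏ : ℝ => moyal ℏ (⇑f) (⇑g) m) (nhdsWithin 0 (Set.Ioi 0))
      (nhds (f m * g m)) := by
  have hscale : Tendsto (fun ℏ : ℝ => 4 * Real.pi * ℏ) (𝓝[>] 0) (𝓝[>] 0) := by
    simpa only [mul_zero, id_eq] using
      TendstoNhdsWithinIoi.const_mul (by positivity : (0 : ℝ) < 4 * Real.pi)
        (tendsto_id (x := 𝓝[>] (0 : ℝ)))
  have hlim := (tendsto_twistedMoyal J (f.compCLMOfContinuousLinearEquiv ℝ equivRealProdCLM)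
    (g.compCLMOfContinuousLinearEquiv ℝ equivRealProdCLM) (measurableEquivRealProd.symm m)).comp
    hscale
  simp_rw [moyal_eq_twistedMoyal]
  -- `compCLMOfContinuousLinearEquiv` is definitionally precomposition with `equivRealProdCLM`.
  convert hlim using 2 <;> rfl
end

section
/- For all Schwartz functions f, g : ℝ² → ℂ, the Moyal product f ⋆_ℏ g is again a Schwartz function on ℝ². -/
/-!
With `ω` the standard symplectic form on `ℝ²`, the exponent of the Moyal kernel is
`ω(x - m, m - y) = ω(m, y - x) - ω(x, y)`. So `f ⋆ g` is, up to a constant, the Fourier integral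
of the Schwartz function `(x, y) ↦ f x * g y * exp (-i ω(x, y) / 2ℏ)` on `ℝ⁴` against the pairing
`((x, y), m) ↦ ω(y - x, m) / 4πℏ`, which is nondegenerate in `m`. After transport to a Euclidean
space, which changes Haar measure only by a scalar, this is the Fourier transform of a Schwartz
function restricted along an injective linear map, hence Schwartz.
-/

open MeasureTheory Complex Filter

open scoped ContDiff SchwartzMap FourierTransform RealInnerProductSpace

theorem ContinuousLinearMap.norm_iteratedFDeriv_comp_right_le
    {G E F : Type*} [NormedAddCommGroup G] [NormedSpace ℝ G] [NormedAddCommGroup E]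
    [NormedSpace ℝ E] [NormedAddCommGroup F] [NormedSpace ℝ F]
    (g : G →L[ℝ] E) {f : E → F} (hf : ContDiff ℝ ∞ f) (x : G) (n : ℕ) :
    ‖iteratedFDeriv ℝ n (f ∘ g) x‖ ≤ ‖iteratedFDeriv ℝ n f (g x)‖ * ‖g‖ ^ n := by
  rw [g.iteratedFDeriv_comp_right hf x (mod_cast le_top)]
  simpa using (iteratedFDeriv ℝ n f (g x)).norm_compContinuousLinearMap_le fun _ => g

theorem Complex.iteratedDeriv_exp_ofReal_mul_I (n : ℕ) :
    iteratedDeriv n (fun t : ℝ => cexp (t * I)) = fun t : ℝ => I ^ n * cexp (t * I) := by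
  induction n with
  | zero => simp
  | succ n ih =>
    ext t
    rw [iteratedDeriv_succ, ih]
    have := ((hasDerivAt_id (t : ℂ)).mul_const I).cexp.comp_ofReal.const_mul (I ^ n)
    simp only [id, one_mul] at this
    rw [this.deriv]
    ring

theorem Complex.hasTemperateGrowth_exp_ofReal_mul_I :
    Function.HasTemperateGrowth fun t : ℝ => cexp (t * I) := by
  refine ⟨(ofRealCLM.contDiff.mul contDiff_const).cexp, fun n => ⟨0, 1, fun t => ?_⟩⟩
  rw [norm_iteratedFDeriv_eq_norm_iteratedDeriv, iteratedDeriv_exp_ofReal_mul_I]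
  simp [norm_exp]

namespace SchwartzMap

variable {D E A : Type*} [NormedAddCommGroup D] [NormedSpace ℝ D] [NormedAddCommGroup E]
  [NormedSpace ℝ E] [NormedRing A] [NormedAlgebra ℝ A]

theorem norm_pow_mul_norm_iteratedFDeriv_tensor_le (f : 𝓢(D, A)) (g : 𝓢(E, A)) (k n : ℕ)
    (z : D × E) :
    ‖z‖ ^ k * ‖iteratedFDeriv ℝ n (fun z : D × E => f z.1 * g z.2) z‖ ≤
      ∑ i ∈ Finset.range (n + 1), (n.choose i : ℝ) *
        (SchwartzMap.seminorm ℝ k i f * SchwartzMap.seminorm ℝ 0 (n - i) g +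
          SchwartzMap.seminorm ℝ 0 i f * SchwartzMap.seminorm ℝ k (n - i) g) := by
  have hfst : ∀ i, ‖iteratedFDeriv ℝ i (f ∘ ContinuousLinearMap.fst ℝ D E) z‖ ≤
      ‖iteratedFDeriv ℝ i f z.1‖ := fun i =>
    ((ContinuousLinearMap.fst ℝ D E).norm_iteratedFDeriv_comp_right_le (f.smooth ⊤) z i).trans
      (mul_le_of_le_one_right (norm_nonneg _)
        (pow_le_one₀ (norm_nonneg _) (ContinuousLinearMap.norm_fst_le ..)))
  have hsnd : ∀ i, ‖iteratedFDeriv ℝ i (g ∘ ContinuousLinearMap.snd ℝ D E) z‖ ≤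
      ‖iteratedFDeriv ℝ i g z.2‖ := fun i =>
    ((ContinuousLinearMap.snd ℝ D E).norm_iteratedFDeriv_comp_right_le (g.smooth ⊤) z i).trans
      (mul_le_of_le_one_right (norm_nonneg _)
        (pow_le_one₀ (norm_nonneg _) (ContinuousLinearMap.norm_snd_le ..)))
  have hz : ‖z‖ ^ k ≤ ‖z.1‖ ^ k + ‖z.2‖ ^ k := by
    rcases max_choice ‖z.1‖ ‖z.2‖ with h | h <;> rw [Prod.norm_def, h]
    · exact le_add_of_nonneg_right (by positivity)
    · exact le_add_of_nonneg_left (by positivity)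
  calc ‖z‖ ^ k * ‖iteratedFDeriv ℝ n (fun z : D × E => f z.1 * g z.2) z‖
      ≤ (‖z.1‖ ^ k + ‖z.2‖ ^ k) * ∑ i ∈ Finset.range (n + 1), (n.choose i : ℝ) *
          ‖iteratedFDeriv ℝ i f z.1‖ * ‖iteratedFDeriv ℝ (n - i) g z.2‖ := by
        refine mul_le_mul hz ((norm_iteratedFDeriv_mul_le ((f.smooth ⊤).comp contDiff_fst)
          ((g.smooth ⊤).comp contDiff_snd) z (mod_cast le_top)).trans ?_) (norm_nonneg _)
          (by positivity)
        gcongr with i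
        exacts [hfst i, hsnd (n - i)]
    _ = ∑ i ∈ Finset.range (n + 1), (n.choose i : ℝ) *
          ((‖z.1‖ ^ k * ‖iteratedFDeriv ℝ i f z.1‖) * ‖iteratedFDeriv ℝ (n - i) g z.2‖ +
            ‖iteratedFDeriv ℝ i f z.1‖ * (‖z.2‖ ^ k * ‖iteratedFDeriv ℝ (n - i) g z.2‖)) := by
        rw [Finset.mul_sum]
        exact Finset.sum_congr rfl fun i _ => by ring
    _ ≤ _ := by
        gcongr with i
        · exact f.le_seminorm ℝ k i z.1
        · exact g.norm_iteratedFDeriv_le_seminorm ℝ (n - i) z.2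
        · exact f.norm_iteratedFDeriv_le_seminorm ℝ i z.1
        · exact g.le_seminorm ℝ k (n - i) z.2

noncomputable def tensor (f : 𝓢(D, A)) (g : 𝓢(E, A)) : 𝓢(D × E, A) where
  toFun z := f z.1 * g z.2
  smooth' := ((f.smooth ⊤).comp contDiff_fst).mul ((g.smooth ⊤).comp contDiff_snd)
  decay' k n := ⟨_, norm_pow_mul_norm_iteratedFDeriv_tensor_le f g k n⟩

@[simp]
theorem tensor_apply (f : 𝓢(D, A)) (g : 𝓢(E, A)) (z : D × E) : f.tensor g z = f z.1 * g z.2 :=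
  rfl

end SchwartzMap

theorem MeasureTheory.Measure.exists_integral_eq_smul_integral_comp {V E G : Type*}
    [NormedAddCommGroup V] [NormedSpace ℝ V] [FiniteDimensional ℝ V]
    [MeasurableSpace V] [BorelSpace V]
    [NormedAddCommGroup E] [NormedSpace ℝ E] [FiniteDimensional ℝ E]
    [MeasurableSpace E] [BorelSpace E] [NormedAddCommGroup G] [NormedSpace ℝ G]
    (ν : Measure V) [ν.IsAddHaarMeasure] (μ : Measure E) [μ.IsAddHaarMeasure] (e : V ≃L[ℝ] E) :
    ∃ c : ℝ, ∀ φ : E → G, ∫ x, φ x ∂μ = c • ∫ v, φ (e v) ∂ν := by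
  set c := addHaarScalarFactor (ν.map e) μ
  have hc : (c : ℝ) ≠ 0 :=
    (NNReal.coe_pos.mpr (addHaarScalarFactor_pos_of_isAddHaarMeasure _ _)).ne'
  have hmap : ν.map e = c • μ := isAddLeftInvariant_eq_smul _ _
  refine ⟨(c : ℝ)⁻¹, fun φ => ?_⟩
  have hcomp := e.toHomeomorph.measurableEmbedding.integral_map (μ := ν) φ
  rw [ContinuousLinearEquiv.coe_toHomeomorph, hmap, integral_smul_nnreal_measure] at hcomp
  rw [← hcomp, NNReal.smul_def, inv_smul_smul₀ hc]

theorem ContinuousLinearMap.exists_inner_eq_apply_apply {V E F : Type*}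
    [NormedAddCommGroup V] [InnerProductSpace ℝ V] [CompleteSpace V]
    [NormedAddCommGroup E] [NormedSpace ℝ E] [NormedAddCommGroup F] [NormedSpace ℝ F]
    (L : E →L[ℝ] F →L[ℝ] ℝ) (e : V →L[ℝ] E) : ∃ W : F →L[ℝ] V, ∀ v m, ⟪v, W m⟫ = L (e v) m := by
  let R : StrongDual ℝ V →L[ℝ] V :=
    (InnerProductSpace.toDual ℝ V).symm.toContinuousLinearEquiv.toContinuousLinearMap
  refine ⟨R.comp (((ContinuousLinearMap.compL ℝ V E ℝ).flip e).comp L.flip), fun v m => ?_⟩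
  rw [real_inner_comm]
  exact InnerProductSpace.toDual_symm_apply

theorem SchwartzMap.exists_coe_eq_fourierIntegral {E F : Type*}
    [NormedAddCommGroup E] [NormedSpace ℝ E] [FiniteDimensional ℝ E]
    [MeasurableSpace E] [BorelSpace E]
    [NormedAddCommGroup F] [NormedSpace ℝ F] [FiniteDimensional ℝ F]
    (μ : Measure E) [μ.IsAddHaarMeasure] (L : E →L[ℝ] F →L[ℝ] ℝ)
    (hL : Function.Injective L.flip) (h : 𝓢(E, ℂ)) :
    ∃ G : 𝓢(F, ℂ), ⇑G = VectorFourier.fourierIntegral 𝐞 μ L.toLinearMap₁₂ h := by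
  let e : EuclideanSpace ℝ (Fin (Module.finrank ℝ E)) ≃L[ℝ] E :=
    ContinuousLinearEquiv.ofFinrankEq (by simp)
  obtain ⟨c, hc⟩ := volume.exists_integral_eq_smul_integral_comp (G := ℂ) μ e
  obtain ⟨W, hW⟩ := L.exists_inner_eq_apply_apply e.toContinuousLinearMap
  have hW_inj : Function.Injective W := by
    refine (injective_iff_map_eq_zero W).mpr fun m hm => hL ?_
    ext x
    simpa [hm] using (hW (e.symm x) m).symm
  obtain ⟨K, -, hK⟩ := W.toLinearMap.injective_iff_antilipschitz.mp hW_inj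
  refine ⟨c • compCLMOfAntilipschitz ℂ W.hasTemperateGrowth hK
    (𝓕 (compCLMOfContinuousLinearEquiv ℂ e h)), ?_⟩
  ext m
  simp [VectorFourier.fourierIntegral, hc, Real.fourier_eq, hW, fourier_coe]

noncomputable def symplecticForm : (ℝ × ℝ) →L[ℝ] (ℝ × ℝ) →L[ℝ] ℝ :=
  (ContinuousLinearMap.fst ℝ ℝ ℝ).smulRight (ContinuousLinearMap.snd ℝ ℝ ℝ) -
    (ContinuousLinearMap.snd ℝ ℝ ℝ).smulRight (ContinuousLinearMap.fst ℝ ℝ ℝ)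

@[simp]
theorem symplecticForm_apply (a b : ℝ × ℝ) : symplecticForm a b = a.1 * b.2 - a.2 * b.1 := by
  simp [symplecticForm]

noncomputable def moyalPairing (ℏ : ℝ) : ((ℝ × ℝ) × (ℝ × ℝ)) →L[ℝ] (ℝ × ℝ) →L[ℝ] ℝ :=
  (4 * Real.pi * ℏ)⁻¹ •
    symplecticForm.comp (ContinuousLinearMap.snd ℝ _ _ - ContinuousLinearMap.fst ℝ _ _)

@[simp]
theorem moyalPairing_apply (ℏ : ℝ) (z : (ℝ × ℝ) × (ℝ × ℝ)) (m : ℝ × ℝ) :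
    moyalPairing ℏ z m = (4 * Real.pi * ℏ)⁻¹ * symplecticForm (z.2 - z.1) m := by
  simp [moyalPairing]

theorem moyalPairing_flip_injective {ℏ : ℝ} (hℏ : ℏ ≠ 0) :
    Function.Injective (moyalPairing ℏ).flip := by
  refine (injective_iff_map_eq_zero _).mpr fun m hm => ?_
  have hω (w : ℝ × ℝ) : symplecticForm w m = 0 := by
    simpa [hℏ, Real.pi_ne_zero] using congrArg (fun φ => φ ((0, 0), w)) hm
  have h₁ := hω (0, 1)
  have h₂ := hω (1, 0)
  simp only [symplecticForm_apply, zero_mul, one_mul, zero_sub, neg_eq_zero, sub_zero] at h₁ h₂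
  exact Prod.ext h₁ h₂

noncomputable def moyalPhase (ℏ : ℝ) (z : (ℝ × ℝ) × (ℝ × ℝ)) : ℂ :=
  cexp (↑(-(2 * ℏ)⁻¹ * symplecticForm z.1 z.2) * I)

theorem hasTemperateGrowth_moyalPhase (ℏ : ℝ) : (moyalPhase ℏ).HasTemperateGrowth :=
  hasTemperateGrowth_exp_ofReal_mul_I.comp <| .comp (by fun_prop) <|
    symplecticForm.bilinear_hasTemperateGrowth
      (ContinuousLinearMap.fst ℝ (ℝ × ℝ) (ℝ × ℝ)).hasTemperateGrowth
      (ContinuousLinearMap.snd ℝ (ℝ × ℝ) (ℝ × ℝ)).hasTemperateGrowth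

theorem moyalKernel_eq (ℏ : ℝ) (m x y : ℝ × ℝ) :
    moyalKernel ℏ m x y = moyalPhase ℏ (x, y) * 𝐞 (-moyalPairing ℏ (x, y) m) := by
  rw [moyalKernel, moyalPhase, Real.fourierChar_apply, ← Complex.exp_add]
  congr 1
  simp only [moyalPairing_apply, symplecticForm_apply, Prod.fst_sub, Prod.snd_sub]
  push_cast
  field_simp
  ring

/-- The Moyal product of two Schwartz functions is again a Schwartz function. -/
theorem moyal_schwartz (ℏ : ℝ) (hℏ : 0 < ℏ) (f g : SchwartzMap (ℝ × ℝ) ℂ) :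
    ∃ F : SchwartzMap (ℝ × ℝ) ℂ, ⇑F = moyal ℏ (⇑f) (⇑g) := by
  -- this measure is `volume`, but instance search does not find its Haar instance in that form
  obtain ⟨G, hG⟩ := SchwartzMap.exists_coe_eq_fourierIntegral
    ((volume : Measure (ℝ × ℝ)).prod volume) (moyalPairing ℏ) (moyalPairing_flip_injective hℏ.ne')
    (SchwartzMap.smulLeftCLM ℂ (moyalPhase ℏ) (f.tensor g))
  refine ⟨((4 * Real.pi * ℏ) ^ 2 : ℝ)⁻¹ • G, ?_⟩
  ext m
  simp only [moyal, smul_apply, hG, VectorFourier.fourierIntegral,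
    ContinuousLinearMap.toLinearMap₁₂_apply_apply_apply, moyalKernel_eq, Circle.smul_def,
    smul_eq_mul, SchwartzMap.smulLeftCLM_apply_apply (hasTemperateGrowth_moyalPhase ℏ),
    SchwartzMap.tensor_apply]
  congr 2 with z
  ring
end

section
/- The Moyal product normalization holds: for every ℏ > 0 and every (p,q) ∈ ℝ², the improper integral defining 1 ⋆_ℏ 1 equals 1, i.e. lim_{L → ∞} (4πℏ)⁻² ∫_{[−L,L]⁴} exp((i/(2ℏ))·[(p''−p)(q−q') − (q''−q)(p−p')]) dp'' dq'' dp' dq' = 1. -/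
/-!
With `c = 1 / (2ℏ)` the kernel factors as `e^{ic(x₁-m₁)(m₂-y₂)} · e^{ic(x₂-m₂)(y₁-m₁)}`, so its
integral over `[-L,L]⁴` is a product of two planar integrals `∫∫_{[-L,L]²} e^{ic(a-p)(q-b)} da db`
(the second one after `y₁ ↦ -y₁`), each of which tends to `2π/c = 4πℏ`.

The `b`-integral is explicit and leaves `∫_{-L-p}^{L-p} e^{icuq} · 2L sinc(cuL) du`. Its real part
is `∫ (L+q) sinc(cu(L+q)) + (L-q) sinc(cu(L-q)) du`, two rescaled sine integrals over intervals
whose ends both run off to `±∞`, so it tends to `2π/c` by Dirichlet's `∫₀^∞ sin t / t dt = π/2`.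
Its imaginary part is odd in `u`, so only the interval between `L + p` and `L - p` survives, where
the integrand is `O(1/L)`. Dirichlet's integral itself follows by writing `1/t = ∫₀^∞ e^{-tu} du`
and swapping the integrals: `∫₀^A sin t / t dt = π/2 - ∫₀^∞ dirichletRemainder A u du`, and the
remainder is `O(1/A)`.
-/

open MeasureTheory Complex Filter

open Set Topology
open scoped Real

lemma intervalIntegral.integral_neg_left_of_odd {E : Type*} [NormedAddCommGroup E]
    [NormedSpace ℝ E] {f : ℝ → E} (hodd : ∀ x, f (-x) = -f x) (hf : Continuous f) (a b : ℝ) :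
    ∫ x in -a..b, f x = ∫ x in a..b, f x := by
  have hsymm : ∫ x in -a..a, f x = 0 := by
    have := intervalIntegral.integral_comp_neg (a := -a) (b := a) f
    simp only [hodd, intervalIntegral.integral_neg, neg_neg] at this
    rw [eq_comm, eq_neg_iff_add_eq_zero, ← two_smul ℝ, smul_eq_zero] at this
    exact this.resolve_left two_ne_zero
  rw [← intervalIntegral.integral_add_adjacent_intervals (hf.intervalIntegrable _ a)
    (hf.intervalIntegrable a b), hsymm, zero_add]

namespace Real

lemma integral_sin_mul_exp_neg_mul (u A : ℝ) :
    ∫ t in (0 : ℝ)..A, sin t * exp (-t * u) =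
      (1 - exp (-A * u) * (cos A + u * sin A)) / (1 + u ^ 2) := by
  have hu : 1 + u ^ 2 ≠ 0 := by positivity
  have hderiv : ∀ t ∈ uIcc (0 : ℝ) A, HasDerivAt
      (fun t => -(exp (-t * u) * (cos t + u * sin t)) / (1 + u ^ 2))
      (sin t * exp (-t * u)) t := by
    intro t _
    have := ((((hasDerivAt_neg t).mul_const u).exp).fun_mul
      ((hasDerivAt_cos t).fun_add ((hasDerivAt_sin t).const_mul u))).fun_neg.div_const (1 + u ^ 2)
    refine this.congr_deriv ?_
    field_simp
    ring
  rw [intervalIntegral.integral_eq_sub_of_hasDerivAt hderiv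
    (Continuous.intervalIntegrable (by fun_prop) _ _)]
  simp only [neg_zero, zero_mul, exp_zero, cos_zero, sin_zero, mul_zero, add_zero, mul_one]
  ring

noncomputable def dirichletRemainder (A u : ℝ) : ℝ :=
  exp (-A * u) * (cos A + u * sin A) / (1 + u ^ 2)

lemma continuous_dirichletRemainder (A : ℝ) : Continuous (dirichletRemainder A) :=
  Continuous.div (by fun_prop) (by fun_prop) fun u => by positivity

lemma abs_dirichletRemainder_le (A : ℝ) {u : ℝ} (hu : 0 ≤ u) :
    |dirichletRemainder A u| ≤ 2 * exp (-A * u) := by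
  have hpos : 0 < 1 + u ^ 2 := by positivity
  have hnum : |cos A + u * sin A| ≤ 2 * (1 + u ^ 2) := by
    calc |cos A + u * sin A| ≤ |cos A| + u * |sin A| := by
          simpa [abs_mul, abs_of_nonneg hu] using abs_add_le (cos A) (u * sin A)
      _ ≤ 1 + u * 1 := by gcongr <;> first | exact abs_cos_le_one A | exact abs_sin_le_one A
      _ ≤ 2 * (1 + u ^ 2) := by nlinarith [sq_nonneg (2 * u - 1)]
  rw [dirichletRemainder, abs_div, abs_mul, abs_of_pos (exp_pos _), abs_of_pos hpos,
    div_le_iff₀ hpos, mul_comm 2, mul_assoc]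
  gcongr

lemma integral_exp_neg_mul_Ioi {A : ℝ} (hA : 0 < A) : ∫ u in Ioi 0, exp (-A * u) = A⁻¹ := by
  rw [integral_exp_mul_Ioi (neg_lt_zero.2 hA), mul_zero, exp_zero]
  field_simp

lemma integrableOn_dirichletRemainder {A : ℝ} (hA : 0 < A) :
    IntegrableOn (dirichletRemainder A) (Ioi 0) := by
  refine ((integrableOn_exp_mul_Ioi (neg_lt_zero.2 hA) 0).const_mul 2).mono'
    (continuous_dirichletRemainder A).aestronglyMeasurable ?_
  filter_upwards [ae_restrict_mem measurableSet_Ioi] with u hu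
  exact abs_dirichletRemainder_le A (le_of_lt hu)

lemma norm_integral_dirichletRemainder_le {A : ℝ} (hA : 0 < A) :
    ‖∫ u in Ioi 0, dirichletRemainder A u‖ ≤ 2 / A := by
  calc ‖∫ u in Ioi 0, dirichletRemainder A u‖ ≤ ∫ u in Ioi 0, 2 * exp (-A * u) := by
        refine norm_integral_le_of_norm_le
          ((integrableOn_exp_mul_Ioi (neg_lt_zero.2 hA) 0).const_mul 2) ?_
        filter_upwards [ae_restrict_mem measurableSet_Ioi] with u hu
        exact abs_dirichletRemainder_le A (le_of_lt hu)
    _ = 2 / A := by rw [integral_const_mul, integral_exp_neg_mul_Ioi hA, div_eq_mul_inv]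

lemma integral_norm_sin_mul_exp_neg_mul_Ioi {t : ℝ} (ht : 0 < t) :
    ∫ u in Ioi 0, ‖sin t * exp (-t * u)‖ = |sin t| / t := by
  simp_rw [norm_mul, norm_of_nonneg (exp_pos _).le, integral_const_mul,
    integral_exp_neg_mul_Ioi ht, Real.norm_eq_abs, div_eq_mul_inv]

lemma integrable_sin_mul_exp_neg_mul (A : ℝ) :
    Integrable (fun z : ℝ × ℝ => sin z.1 * exp (-z.1 * z.2))
      ((volume.restrict (Ioc 0 A)).prod (volume.restrict (Ioi 0))) := by
  have hmeas : AEStronglyMeasurable (fun z : ℝ × ℝ => sin z.1 * exp (-z.1 * z.2))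
      ((volume.restrict (Ioc 0 A)).prod (volume.restrict (Ioi 0))) :=
    (by fun_prop : Continuous fun z : ℝ × ℝ => sin z.1 * exp (-z.1 * z.2)).aestronglyMeasurable
  refine (integrable_prod_iff hmeas).2 ⟨?_, ?_⟩
  · filter_upwards [ae_restrict_mem measurableSet_Ioc] with t ht
    exact (integrableOn_exp_mul_Ioi (neg_lt_zero.2 ht.1) 0).const_mul (sin t)
  · refine Integrable.of_bound hmeas.norm.integral_prod_right' 1 ?_
    filter_upwards [ae_restrict_mem measurableSet_Ioc] with t ht
    rw [integral_norm_sin_mul_exp_neg_mul_Ioi ht.1,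
      norm_of_nonneg (div_nonneg (abs_nonneg _) ht.1.le), div_le_one ht.1]
    exact (abs_sin_le_abs).trans (abs_of_pos ht.1).le

lemma integral_sinc_eq_pi_div_two_sub {A : ℝ} (hA : 0 < A) :
    ∫ t in (0 : ℝ)..A, sinc t = π / 2 - ∫ u in Ioi 0, dirichletRemainder A u := by
  have hsinc : ∀ t ∈ Ioc 0 A, sinc t = ∫ u in Ioi 0, sin t * exp (-t * u) := by
    intro t ht
    rw [integral_const_mul, integral_exp_neg_mul_Ioi ht.1, sinc_of_ne_zero ht.1.ne',
      div_eq_mul_inv]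
  calc ∫ t in (0 : ℝ)..A, sinc t
      = ∫ t in Ioc 0 A, ∫ u in Ioi 0, sin t * exp (-t * u) := by
        rw [intervalIntegral.integral_of_le hA.le]
        exact setIntegral_congr_fun measurableSet_Ioc hsinc
    _ = ∫ u in Ioi 0, ∫ t in Ioc 0 A, sin t * exp (-t * u) :=
        integral_integral_swap (integrable_sin_mul_exp_neg_mul A)
    _ = ∫ u in Ioi 0, ((1 + u ^ 2)⁻¹ - dirichletRemainder A u) := by
        refine integral_congr_ae (ae_of_all _ fun u => ?_)
        dsimp only
        rw [← intervalIntegral.integral_of_le hA.le, integral_sin_mul_exp_neg_mul,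
          dirichletRemainder]
        ring
    _ = π / 2 - ∫ u in Ioi 0, dirichletRemainder A u := by
        rw [integral_sub integrable_inv_one_add_sq.integrableOn
          (integrableOn_dirichletRemainder hA), integral_Ioi_inv_one_add_sq, arctan_zero,
          sub_zero]

lemma tendsto_integral_sinc_atTop :
    Tendsto (fun A => ∫ t in (0 : ℝ)..A, sinc t) atTop (𝓝 (π / 2)) := by
  have hrem : Tendsto (fun A => ∫ u in Ioi 0, dirichletRemainder A u) atTop (𝓝 0) := by
    refine squeeze_zero_norm' ?_ ((tendsto_const_nhds (x := (2 : ℝ))).div_atTop tendsto_id)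
    filter_upwards [eventually_gt_atTop 0] with A hA
    exact norm_integral_dirichletRemainder_le hA
  refine (sub_zero (π / 2) ▸ tendsto_const_nhds.sub hrem).congr' ?_
  filter_upwards [eventually_gt_atTop 0] with A hA
  exact (integral_sinc_eq_pi_div_two_sub hA).symm

lemma integral_sinc_neg (A : ℝ) : ∫ t in (0 : ℝ)..-A, sinc t = -∫ t in (0 : ℝ)..A, sinc t := by
  have := intervalIntegral.integral_comp_neg (a := 0) (b := A) sinc
  simp only [sinc_neg, neg_zero] at this
  rw [this, intervalIntegral.integral_symm]

lemma tendsto_integral_sinc_atBot :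
    Tendsto (fun A => ∫ t in (0 : ℝ)..A, sinc t) atBot (𝓝 (-(π / 2))) := by
  have := tendsto_integral_sinc_atTop.neg.comp tendsto_neg_atBot_atTop
  simpa [Function.comp_def, ← integral_sinc_neg] using this

lemma tendsto_integral_sinc {ι : Type*} {l : Filter ι} {α β : ι → ℝ}
    (hα : Tendsto α l atBot) (hβ : Tendsto β l atTop) :
    Tendsto (fun i => ∫ t in α i..β i, sinc t) l (𝓝 π) := by
  have hint : ∀ a b : ℝ, IntervalIntegrable sinc volume a b :=
    fun a b => continuous_sinc.intervalIntegrable a b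
  have := (tendsto_integral_sinc_atTop.comp hβ).sub (tendsto_integral_sinc_atBot.comp hα)
  rw [sub_neg_eq_add, add_halves] at this
  refine this.congr fun i => ?_
  exact intervalIntegral.integral_interval_sub_left (hint 0 (β i)) (hint 0 (α i))

lemma mul_sinc_mul {x : ℝ} (hx : x ≠ 0) (k : ℝ) : k * sinc (x * k) = sin (x * k) / x := by
  rcases eq_or_ne k 0 with rfl | hk
  · simp
  · rw [sinc_of_ne_zero (mul_ne_zero hx hk)]
    field_simp

lemma abs_mul_sinc_mul_le {x : ℝ} (hx : x ≠ 0) (k : ℝ) : |k * sinc (x * k)| ≤ |x|⁻¹ := by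
  rw [mul_sinc_mul hx, abs_div, div_eq_mul_inv]
  exact mul_le_of_le_one_left (inv_nonneg.2 (abs_nonneg x)) (abs_sin_le_one _)

lemma two_mul_cos_mul_sinc (x q L : ℝ) :
    2 * L * cos (x * q) * sinc (x * L) =
      (L + q) * sinc (x * (L + q)) + (L - q) * sinc (x * (L - q)) := by
  rcases eq_or_ne x 0 with rfl | hx
  · simp only [zero_mul, cos_zero, mul_one, sinc_zero]
    ring
  · have := mul_sinc_mul hx
    rw [show 2 * L * cos (x * q) * sinc (x * L) = 2 * cos (x * q) * (L * sinc (x * L)) by ring,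
      this, this, this, mul_add, mul_sub, sin_add, sin_sub]
    field_simp
    ring

lemma integral_mul_sinc_mul {c : ℝ} (hc : c ≠ 0) (k A B : ℝ) :
    ∫ u in A..B, k * sinc (c * u * k) = c⁻¹ * ∫ t in c * k * A..c * k * B, sinc t := by
  rcases eq_or_ne k 0 with rfl | hk
  · simp
  · simp_rw [mul_right_comm c _ k, intervalIntegral.integral_const_mul,
      intervalIntegral.integral_comp_mul_left sinc (mul_ne_zero hc hk), smul_eq_mul]
    field_simp

lemma tendsto_integral_mul_sinc_mul {ι : Type*} {l : Filter ι} {c : ℝ} (hc : 0 < c)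
    {k A B : ι → ℝ} (hk : Tendsto k l atTop) (hA : Tendsto A l atBot) (hB : Tendsto B l atTop) :
    Tendsto (fun i => ∫ u in A i..B i, k i * sinc (c * u * k i)) l (𝓝 (π / c)) := by
  have hck : Tendsto (fun i => c * k i) l atTop := hk.const_mul_atTop hc
  simp_rw [integral_mul_sinc_mul hc.ne', div_eq_inv_mul]
  exact (tendsto_integral_sinc (hck.atTop_mul_atBot₀ hA) (hck.atTop_mul_atTop₀ hB)).const_mul _

lemma abs_two_mul_sin_mul_sinc_le {c : ℝ} (hc : 0 < c) (q L : ℝ) {u : ℝ} (hu : u ≠ 0) :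
    |2 * L * sin (c * u * q) * sinc (c * u * L)| ≤ 2 / (c * |u|) :=
  calc |2 * L * sin (c * u * q) * sinc (c * u * L)|
      = 2 * |sin (c * u * q)| * |L * sinc (c * u * L)| := by
        rw [show 2 * L * sin (c * u * q) * sinc (c * u * L) =
          2 * sin (c * u * q) * (L * sinc (c * u * L)) by ring, abs_mul, abs_mul, abs_two]
    _ ≤ 2 * 1 * |c * u|⁻¹ := by
        gcongr
        exacts [abs_sin_le_one _, abs_mul_sinc_mul_le (mul_ne_zero hc.ne' hu) L]
    _ = 2 / (c * |u|) := by rw [abs_mul, abs_of_pos hc, mul_one, div_eq_mul_inv]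

lemma norm_integral_sin_mul_sinc_le {c : ℝ} (hc : 0 < c) (p q : ℝ) {L : ℝ} (hL : |p| < L) :
    ‖∫ u in (-L - p)..(L - p), 2 * L * sin (c * u * q) * sinc (c * u * L)‖ ≤
      4 * |p| / (c * (L - |p|)) := by
  have hodd : ∀ u, 2 * L * sin (c * -u * q) * sinc (c * -u * L) =
      -(2 * L * sin (c * u * q) * sinc (c * u * L)) := by
    intro u
    simp only [mul_neg, neg_mul, sin_neg, sinc_neg]
  have hbound : ∀ u ∈ uIoc (L + p) (L - p),
      ‖2 * L * sin (c * u * q) * sinc (c * u * L)‖ ≤ 2 / (c * (L - |p|)) := by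
    intro u hu
    have hu' : L - |p| < u :=
      lt_of_le_of_lt (le_min (by linarith [neg_abs_le p]) (by linarith [le_abs_self p])) hu.1
    have hupos : 0 < u := by linarith
    refine (abs_two_mul_sin_mul_sinc_le hc q L hupos.ne').trans ?_
    rw [abs_of_pos hupos]
    gcongr
  rw [show -L - p = -(L + p) by ring,
    intervalIntegral.integral_neg_left_of_odd hodd (by fun_prop)]
  calc _ ≤ 2 / (c * (L - |p|)) * |L - p - (L + p)| :=
        intervalIntegral.norm_integral_le_of_norm_le_const hbound
    _ = 4 * |p| / (c * (L - |p|)) := by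
        rw [show L - p - (L + p) = -(2 * p) by ring, abs_neg, abs_mul, abs_two]
        ring

lemma tendsto_integral_sin_mul_sinc {c : ℝ} (hc : 0 < c) (p q : ℝ) :
    Tendsto (fun L => ∫ u in (-L - p)..(L - p), 2 * L * sin (c * u * q) * sinc (c * u * L))
      atTop (𝓝 0) := by
  refine squeeze_zero_norm' ?_ ((tendsto_const_nhds (x := 4 * |p|)).div_atTop
    ((tendsto_atTop_add_const_right atTop (-|p|) tendsto_id).const_mul_atTop hc))
  filter_upwards [eventually_gt_atTop |p|] with L hL
  exact norm_integral_sin_mul_sinc_le hc p q hL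

end Real

noncomputable def moyalFactor (c p q a b : ℝ) : ℂ :=
  cexp (I * ((c * (a - p) * (q - b) : ℝ) : ℂ))

lemma integral_cexp_ofReal_mul_mul_I (s r : ℝ) :
    ∫ t in -r..r, cexp ((s * t : ℝ) * I) = ((2 * r * Real.sinc (s * r) : ℝ) : ℂ) := by
  rcases eq_or_ne s 0 with rfl | hs
  · simp only [zero_mul, ofReal_zero, exp_zero, intervalIntegral.integral_const, real_smul,
      Real.sinc_zero]
    push_cast
    ring
  · rw [intervalIntegral.integral_comp_mul_left (fun t : ℝ => cexp (t * I)) hs, mul_neg,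
      integral_exp_mul_I_eq_sinc, real_smul]
    have : (s : ℂ) ≠ 0 := ofReal_ne_zero.2 hs
    push_cast
    field_simp

lemma integral_moyalFactor_right (c p q a L : ℝ) :
    ∫ b in -L..L, moyalFactor c p q a b =
      cexp (I * ((c * (a - p) * q : ℝ) : ℂ)) * ((2 * L * Real.sinc (c * (a - p) * L) : ℝ) : ℂ) := by
  have hfactor : ∀ b, moyalFactor c p q a b =
      cexp (I * ((c * (a - p) * q : ℝ) : ℂ)) * cexp ((-(c * (a - p)) * b : ℝ) * I) := by
    intro b
    rw [moyalFactor, ← Complex.exp_add]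
    push_cast
    ring_nf
  simp_rw [hfactor, intervalIntegral.integral_const_mul, integral_cexp_ofReal_mul_mul_I, neg_mul,
    Real.sinc_neg]

lemma cexp_mul_sinc_eq (x q L : ℝ) :
    cexp (I * ((x * q : ℝ) : ℂ)) * ((2 * L * Real.sinc (x * L) : ℝ) : ℂ) =
      (((L + q) * Real.sinc (x * (L + q)) + (L - q) * Real.sinc (x * (L - q)) : ℝ) : ℂ) +
        I * ((2 * L * Real.sin (x * q) * Real.sinc (x * L) : ℝ) : ℂ) := by
  rw [← Real.two_mul_cos_mul_sinc, mul_comm I, Complex.exp_mul_I]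
  push_cast
  ring

lemma tendsto_integral_moyalFactor {c : ℝ} (hc : 0 < c) (p q : ℝ) :
    Tendsto (fun L => ∫ a in -L..L, ∫ b in -L..L, moyalFactor c p q a b) atTop
      (𝓝 ((2 * π / c : ℝ) : ℂ)) := by
  have hsplit : ∀ L, ∫ a in -L..L, ∫ b in -L..L, moyalFactor c p q a b =
      ((∫ u in (-L - p)..(L - p),
        ((L + q) * Real.sinc (c * u * (L + q)) + (L - q) * Real.sinc (c * u * (L - q))) : ℝ) : ℂ) +
      I * ((∫ u in (-L - p)..(L - p),
        2 * L * Real.sin (c * u * q) * Real.sinc (c * u * L) : ℝ) : ℂ) := by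
    intro L
    simp_rw [integral_moyalFactor_right]
    rw [intervalIntegral.integral_comp_sub_right
      (fun u => cexp (I * ((c * u * q : ℝ) : ℂ)) * ((2 * L * Real.sinc (c * u * L) : ℝ) : ℂ)) p]
    simp_rw [cexp_mul_sinc_eq]
    rw [intervalIntegral.integral_add, intervalIntegral.integral_const_mul,
      intervalIntegral.integral_ofReal, intervalIntegral.integral_ofReal]
    all_goals exact Continuous.intervalIntegrable (by fun_prop) _ _
  have hA : Tendsto (fun L : ℝ => -L - p) atTop atBot :=
    tendsto_atBot_add_const_right _ (-p) tendsto_neg_atTop_atBot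
  have hB : Tendsto (fun L : ℝ => L - p) atTop atTop :=
    tendsto_atTop_add_const_right _ (-p) tendsto_id
  have hre : Tendsto (fun L => ∫ u in (-L - p)..(L - p),
      ((L + q) * Real.sinc (c * u * (L + q)) + (L - q) * Real.sinc (c * u * (L - q))))
      atTop (𝓝 (π / c + π / c)) := by
    refine ((Real.tendsto_integral_mul_sinc_mul hc
      (tendsto_atTop_add_const_right _ q tendsto_id) hA hB).add
      (Real.tendsto_integral_mul_sinc_mul hc
        (tendsto_atTop_add_const_right _ (-q) tendsto_id) hA hB)).congr fun L => ?_
    exact (intervalIntegral.integral_add (Continuous.intervalIntegrable (by fun_prop) _ _)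
      (Continuous.intervalIntegrable (by fun_prop) _ _)).symm
  have := ((continuous_ofReal.tendsto _).comp hre).add
    (((continuous_ofReal.tendsto _).comp (Real.tendsto_integral_sin_mul_sinc hc p q)).const_mul I)
  rw [ofReal_zero, mul_zero, add_zero, ← add_div, ← two_mul] at this
  exact this.congr fun L => (hsplit L).symm

lemma setIntegral_Icc_eq_intervalIntegral {E : Type*} [NormedAddCommGroup E] [NormedSpace ℝ E]
    (f : ℝ → E) {L : ℝ} (hL : 0 ≤ L) : ∫ x in Icc (-L) L, f x = ∫ x in -L..L, f x := by
  rw [intervalIntegral.integral_of_le (by linarith), integral_Icc_eq_integral_Ioc]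

lemma setIntegral_box_mul_eq {F G : ℝ → ℝ → ℂ} (hF : Continuous (Function.uncurry F))
    (hG : Continuous (Function.uncurry G)) {L : ℝ} (hL : 0 ≤ L) :
    ∫ xy in Icc (-L, -L) (L, L) ×ˢ Icc (-L, -L) (L, L), F xy.1.1 xy.2.2 * G xy.1.2 xy.2.1 =
      (∫ a in -L..L, ∫ b in -L..L, F a b) * ∫ a in -L..L, ∫ b in -L..L, G a b := by
  have hbox : Icc ((-L : ℝ), (-L : ℝ)) (L, L) = Icc (-L) L ×ˢ Icc (-L) L := Icc_prod_eq _ _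
  have hint : IntegrableOn (fun xy : (ℝ × ℝ) × (ℝ × ℝ) => F xy.1.1 xy.2.2 * G xy.1.2 xy.2.1)
      (Icc (-L, -L) (L, L) ×ˢ Icc (-L, -L) (L, L)) (volume.prod volume) := by
    refine ContinuousOn.integrableOn_compact (isCompact_Icc.prod isCompact_Icc) ?_
    exact ((hF.comp (continuous_fst.fst.prodMk continuous_snd.snd)).mul
      (hG.comp (continuous_fst.snd.prodMk continuous_snd.fst))).continuousOn
  calc ∫ xy in Icc (-L, -L) (L, L) ×ˢ Icc (-L, -L) (L, L), F xy.1.1 xy.2.2 * G xy.1.2 xy.2.1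
      = ∫ x in Icc (-L, -L) (L, L), ∫ y in Icc (-L, -L) (L, L), F x.1 y.2 * G x.2 y.1 := by
        rw [Measure.volume_eq_prod]
        exact setIntegral_prod _ hint
    _ = ∫ x in Icc (-L, -L) (L, L),
          (∫ b in Icc (-L) L, F x.1 b) * ∫ a in Icc (-L) L, G x.2 a := by
        refine integral_congr_ae (ae_of_all _ fun x => ?_)
        simp_rw [hbox, Measure.volume_eq_prod, mul_comm (F _ _), mul_comm (∫ b in _, F x.1 b)]
        exact setIntegral_prod_mul (G x.2) (F x.1) _ _
    _ = (∫ a in -L..L, ∫ b in -L..L, F a b) * ∫ a in -L..L, ∫ b in -L..L, G a b := by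
        rw [hbox, Measure.volume_eq_prod, setIntegral_prod_mul (fun a => ∫ b in Icc (-L) L, F a b)
          (fun a => ∫ b in Icc (-L) L, G a b)]
        simp_rw [setIntegral_Icc_eq_intervalIntegral _ hL]

lemma moyalKernel_eq_mul (ℏ : ℝ) (m x y : ℝ × ℝ) :
    moyalKernel ℏ m x y =
      moyalFactor (2 * ℏ)⁻¹ m.1 m.2 x.1 y.2 * moyalFactor (2 * ℏ)⁻¹ m.2 (-m.1) x.2 (-y.1) := by
  rw [moyalKernel, moyalFactor, moyalFactor, ← Complex.exp_add]
  congr 1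
  push_cast
  ring

lemma integral_integral_moyalFactor_comp_neg (c p q L : ℝ) :
    ∫ a in -L..L, ∫ b in -L..L, moyalFactor c p q a (-b) =
      ∫ a in -L..L, ∫ b in -L..L, moyalFactor c p q a b := by
  refine intervalIntegral.integral_congr fun a _ => ?_
  simp only [intervalIntegral.integral_comp_neg (moyalFactor c p q a), neg_neg]

lemma integral_moyalKernel_box (ℏ : ℝ) (m : ℝ × ℝ) {L : ℝ} (hL : 0 ≤ L) :
    ∫ xy in Icc (-L, -L) (L, L) ×ˢ Icc (-L, -L) (L, L), moyalKernel ℏ m xy.1 xy.2 =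
      (∫ a in -L..L, ∫ b in -L..L, moyalFactor (2 * ℏ)⁻¹ m.1 m.2 a b) *
        ∫ a in -L..L, ∫ b in -L..L, moyalFactor (2 * ℏ)⁻¹ m.2 (-m.1) a b := by
  rw [← integral_integral_moyalFactor_comp_neg _ m.2]
  simp_rw [moyalKernel_eq_mul]
  exact setIntegral_box_mul_eq (F := moyalFactor (2 * ℏ)⁻¹ m.1 m.2)
    (G := fun a b => moyalFactor (2 * ℏ)⁻¹ m.2 (-m.1) a (-b))
    (by unfold moyalFactor Function.uncurry; fun_prop)
    (by unfold moyalFactor Function.uncurry; fun_prop) hL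

/-- Normalization of the Moyal product: the improper integral defining `1 ⋆_ℏ 1` equals 1,
as a limit over expanding boxes `[−L,L]⁴`. -/
theorem moyal_normalization (ℏ : ℝ) (hℏ : 0 < ℏ) (m : ℝ × ℝ) :
    Tendsto (fun L : ℝ => ((4 * Real.pi * ℏ) ^ 2 : ℝ)⁻¹ •
        ∫ xy in Set.Icc (-L, -L) (L, L) ×ˢ Set.Icc (-L, -L) (L, L),
          moyalKernel ℏ m xy.1 xy.2) atTop (nhds 1) := by
  have hc : 0 < (2 * ℏ)⁻¹ := by positivity
  have hval : ((4 * π * ℏ) ^ 2 : ℝ)⁻¹ •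
      (((2 * π / (2 * ℏ)⁻¹ : ℝ) : ℂ) * ((2 * π / (2 * ℏ)⁻¹ : ℝ) : ℂ)) = 1 := by
    rw [real_smul, ← ofReal_mul, ← ofReal_mul, ← ofReal_one]
    congr 1
    field_simp
    ring
  have := ((tendsto_integral_moyalFactor hc m.1 m.2).mul
    (tendsto_integral_moyalFactor hc m.2 (-m.1))).const_smul ((4 * π * ℏ) ^ 2 : ℝ)⁻¹
  rw [hval] at this
  refine this.congr' ?_
  filter_upwards [eventually_ge_atTop 0] with L hL
  rw [integral_moyalKernel_box ℏ m hL]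
end
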